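/- In the polynomial ring ℚ[x₁, x₂, x̄₁, x̄₂] in four (commuting) variables over ℚ, the two-element sequence (x₁x₂, x̄₁x₂ + x₁x̄₂) is a regular sequence: x₁x₂ is a nonzerodivisor on the ring, the image of x̄₁x₂ + x₁x̄₂ is a nonzerodivisor on the quotient ring ℚ[x₁, x₂, x̄₁, x̄₂]/(x₁x₂), and the ideal generated by the two elements is proper. -/

import Mathlib

open MvPolynomial

open Pointwise


noncomputable def phi (i : Fin 4) : MvPolynomial (Fin 4) ℚ →ₐ[ℚ] MvPolynomial (Fin 4) ℚ :=
  aeval (fun j => if j = i then 0 else X j)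

lemma phi_ne_dvd {i : Fin 4} {p : MvPolynomial (Fin 4) ℚ} (h : phi i p ≠ 0) :
    ¬ (X i ∣ p) := by
  rintro ⟨c, rfl⟩
  apply h
  simp [phi]

lemma prime_X4 (i : Fin 4) : Prime (X i : MvPolynomial (Fin 4) ℚ) := by
  rw [← MulEquiv.prime_iff (renameEquiv ℚ (Equiv.swap i 0)).toMulEquiv]
  have h1 : (renameEquiv ℚ (Equiv.swap i 0)).toMulEquiv (X i) = (X 0 : MvPolynomial (Fin 4) ℚ) := by
    simp
  rw [h1, ← MulEquiv.prime_iff (finSuccEquiv ℚ 3).toMulEquiv]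
  have h2 : (finSuccEquiv ℚ 3).toMulEquiv (X 0 : MvPolynomial (Fin 4) ℚ) = Polynomial.X := by
    simpa using finSuccEquiv_X_zero (R := ℚ) (n := 3)
  rw [h2]
  exact Polynomial.prime_X

lemma key_dvd (f : MvPolynomial (Fin 4) ℚ)
    (h : (X 0 : MvPolynomial (Fin 4) ℚ) * X 1 ∣ (X 2 * X 1 + X 0 * X 3) * f) :
    (X 0 : MvPolynomial (Fin 4) ℚ) * X 1 ∣ f := by
  set b : MvPolynomial (Fin 4) ℚ := X 2 * X 1 + X 0 * X 3 with hb
  have h0b : ¬ (X 0 : MvPolynomial (Fin 4) ℚ) ∣ b := by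
    apply phi_ne_dvd
    have : phi 0 b = X 2 * X 1 := by simp [phi, hb]
    rw [this]
    exact mul_ne_zero (X_ne_zero 2) (X_ne_zero 1)
  have h1b : ¬ (X 1 : MvPolynomial (Fin 4) ℚ) ∣ b := by
    apply phi_ne_dvd
    have : phi 1 b = X 0 * X 3 := by simp [phi, hb]
    rw [this]
    exact mul_ne_zero (X_ne_zero 0) (X_ne_zero 3)
  have h0 : (X 0 : MvPolynomial (Fin 4) ℚ) ∣ f :=
    ((prime_X4 0).dvd_or_dvd (dvd_trans (dvd_mul_right _ _) h)).resolve_left h0b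
  have h1 : (X 1 : MvPolynomial (Fin 4) ℚ) ∣ f :=
    ((prime_X4 1).dvd_or_dvd (dvd_trans (dvd_mul_left _ _) h)).resolve_left h1b
  obtain ⟨g, rfl⟩ := h0
  have h10 : ¬ (X 1 : MvPolynomial (Fin 4) ℚ) ∣ X 0 := by
    apply phi_ne_dvd
    have : phi 1 (X 0 : MvPolynomial (Fin 4) ℚ) = X 0 := by simp [phi]
    rw [this]
    exact X_ne_zero 0
  have := ((prime_X4 1).dvd_or_dvd h1).resolve_left h10
  exact mul_dvd_mul_left _ this

lemma mem_smul_top_iff (a x : MvPolynomial (Fin 4) ℚ) :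
    x ∈ (a • ⊤ : Submodule (MvPolynomial (Fin 4) ℚ) (MvPolynomial (Fin 4) ℚ)) ↔ a ∣ x := by
  rw [← SetLike.mem_coe, Submodule.coe_pointwise_smul, Set.mem_smul_set]
  simp [dvd_def, smul_eq_mul, eq_comm]

/-- In the polynomial ring `ℚ[x₁, x₂, x̄₁, x̄₂]` (with `X 0 = x₁`, `X 1 = x₂`,
`X 2 = x̄₁`, `X 3 = x̄₂`), the sequence `(x₁x₂, x̄₁x₂ + x₁x̄₂)` is a regular
sequence: `x₁x₂` is a nonzerodivisor on the ring, the image of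
`x̄₁x₂ + x₁x̄₂` is a nonzerodivisor on the quotient by `(x₁x₂)`, and the ideal
generated by the two elements is proper. -/
theorem regular_sequence_dy_dybar :
    RingTheory.Sequence.IsRegular (MvPolynomial (Fin 4) ℚ)
      [(X 0 : MvPolynomial (Fin 4) ℚ) * X 1, X 2 * X 1 + X 0 * X 3] := by
  set R := MvPolynomial (Fin 4) ℚ
  set a : R := X 0 * X 1 with ha
  set b : R := X 2 * X 1 + X 0 * X 3 with hb
  have hreg_a : IsSMulRegular R a := by
    intro x y hxy
    exact mul_left_cancel₀ (mul_ne_zero (X_ne_zero 0) (X_ne_zero 1)) hxy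
  have hreg_b : IsSMulRegular (QuotSMulTop a R) b := by
    intro x y hxy
    obtain ⟨u, rfl⟩ := Submodule.Quotient.mk_surjective _ x
    obtain ⟨v, rfl⟩ := Submodule.Quotient.mk_surjective _ y
    rw [Submodule.Quotient.eq]
    have hxy' : Submodule.Quotient.mk (p := (a • ⊤ : Submodule R R)) (b * u)
        = Submodule.Quotient.mk (b * v) := hxy
    rw [Submodule.Quotient.eq] at hxy'
    rw [mem_smul_top_iff] at hxy' ⊢
    have : a ∣ b * (u - v) := by rwa [mul_sub]
    exact key_dvd _ this
  constructor
  · exact RingTheory.Sequence.IsWeaklyRegular.cons hreg_a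
      ((RingTheory.Sequence.isWeaklyRegular_singleton_iff _ _).mpr hreg_b)
  · intro h
    rw [Ideal.smul_eq_mul, Ideal.mul_top] at h
    have h2 : (1 : R) ∈ Ideal.ofList [a, b] := by rw [← h]; trivial
    have h3 : (1 : R) ∈ Ideal.span {a, b} := by
      have he : ({r | r ∈ [a, b]} : Set R) = {a, b} := by ext; simp
      rwa [Ideal.ofList, he] at h2
    rw [Ideal.mem_span_pair] at h3
    obtain ⟨c, d, hcd⟩ := h3
    apply_fun constantCoeff at hcd
    simp [ha, hb] at hcd
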